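/- arXiv:2201.00240 — 5 statements merged into one kernel-verified Lean document; each statement's English description precedes it below -/
import Mathlib

section
/- Let r ≥ 2 be an integer. For every triple (a,b,c) ∈ ℕ³ with a ≥ r + c and a − r − c even, the flip with offset r, flip(r;(a,b,c)) = (r + 2b + c, (a − r − c)/2, c), again lies in the domain of flip(r;·) (its first entry is ≥ r plus its third entry, with the difference even), applying flip(r;·) twice returns the original triple (a,b,c), and flip(r;·) preserves the weight: (r + 2b + c) + 2·((a − r − c)/2) + c = a + 2b + c. -/
/-- A hook+column partition `(a, 2^b, 1^c)` is encoded as the triple `(a, b, c)`.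
The flip with offset `r` sends `(a, b, c)` to `(r + 2b + c, (a - r - c)/2, c)`. -/
def hcFlip (r : ℕ) (p : ℕ × ℕ × ℕ) : ℕ × ℕ × ℕ :=
  (r + 2 * p.2.1 + p.2.2, (p.1 - r - p.2.2) / 2, p.2.2)

/-- The domain of the flip with offset `r`: triples `(a, b, c)` with `a ≥ r + c`
and `a - r - c` even. -/
def InFlipDomain (r : ℕ) (p : ℕ × ℕ × ℕ) : Prop :=
  r + p.2.2 ≤ p.1 ∧ 2 ∣ (p.1 - r - p.2.2)

/-- The flip with offset `r ≥ 2` maps its domain into itself, is an involution on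
its domain, and preserves the weight `a + 2b + c`. -/
theorem flip_mem_domain_involutive_weight (r : ℕ) (hr : 2 ≤ r) (a b c : ℕ)
    (h : InFlipDomain r (a, b, c)) :
    InFlipDomain r (hcFlip r (a, b, c)) ∧
    hcFlip r (hcFlip r (a, b, c)) = (a, b, c) ∧
    (hcFlip r (a, b, c)).1 + 2 * (hcFlip r (a, b, c)).2.1 + (hcFlip r (a, b, c)).2.2
      = a + 2 * b + c := by
  obtain ⟨hle, k, hk⟩ := h
  simp only [hcFlip, InFlipDomain] at *
  have ha : a = r + c + 2 * k := by omega
  subst ha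
  have h2 : (r + c + 2 * k - r - c) / 2 = k := by omega
  refine ⟨⟨by omega, ⟨b, by omega⟩⟩, ?_, by omega⟩
  simp only [h2, Prod.mk.injEq]
  exact ⟨by omega, by omega, trivial⟩
end

section
/- Let r ≥ 2 be an integer and set R = 2r − 2. Let β, δ be even natural numbers and γ an odd natural number, and set λ₁ = R + 2δ + γ and λ₁ᴿ = R + 2β + γ (both odd). Then the triple μ = ((λ₁ + 1)/2, β/2, (γ − 1)/2) lies in the domain of flip(r;·), and flip(r; μ) = ((λ₁ᴿ + 1)/2, δ/2, (γ − 1)/2). -/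
/-- Let `r ≥ 2`, `R = 2r - 2`, let `β, δ` be even, `γ` odd, `λ₁ = R + 2δ + γ` and
`λ₁ᴿ = R + 2β + γ`. Then `μ = ((λ₁+1)/2, β/2, (γ-1)/2)` lies in the domain of the
flip with offset `r`, and `flip(r; μ) = ((λ₁ᴿ+1)/2, δ/2, (γ-1)/2)`. -/
theorem flip_of_mu_odd_case (r β δ γ : ℕ) (hr : 2 ≤ r)
    (hβ : Even β) (hδ : Even δ) (hγ : Odd γ) :
    InFlipDomain r ((2 * r - 2 + 2 * δ + γ + 1) / 2, β / 2, (γ - 1) / 2) ∧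
    hcFlip r ((2 * r - 2 + 2 * δ + γ + 1) / 2, β / 2, (γ - 1) / 2)
      = ((2 * r - 2 + 2 * β + γ + 1) / 2, δ / 2, (γ - 1) / 2) := by
  obtain ⟨b, rfl⟩ := hβ
  obtain ⟨d, rfl⟩ := hδ
  obtain ⟨c, rfl⟩ := hγ
  simp only [InFlipDomain, hcFlip, Prod.mk.injEq]
  refine ⟨⟨?_, ?_⟩, ?_, ?_, trivial⟩ <;> omega
end

section
/- Let r ≥ 2 be an integer, let δ, β ∈ ℕ, let γ ∈ ℕ be even, and let w : ℕ³ → ℕ be r-flip-compatible. Then Σ_{m ∈ ℕ, 2m ≤ β} w(r + δ + γ/2 − 1, m, β + γ/2 − 2m) = Σ_{m' ∈ ℕ, 2m' + 1 ≤ δ} w(r + β + γ/2, m', δ + γ/2 − 1 − 2m'). -/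
/-- `w : ℕ³ → ℕ` is `r`-flip-compatible if every triple with nonzero weight lies
in the domain of the flip with offset `r` and `w` is invariant under that flip. -/
def FlipCompatible (r : ℕ) (w : ℕ × ℕ × ℕ → ℕ) : Prop :=
  ∀ p, w p ≠ 0 → InFlipDomain r p ∧ w (hcFlip r p) = w p

/-- Let `r ≥ 2`, `δ, β ∈ ℕ`, `γ` even, and `w` be `r`-flip-compatible. Then
`Σ_{2m ≤ β} w(r + δ + γ/2 - 1, m, β + γ/2 - 2m)
  = Σ_{2m' + 1 ≤ δ} w(r + β + γ/2, m', δ + γ/2 - 1 - 2m')`. -/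
theorem sum_D2_0_eq_sum_D2_2 (r δ β γ : ℕ) (hr : 2 ≤ r) (hγ : Even γ)
    (w : ℕ × ℕ × ℕ → ℕ) (hw : FlipCompatible r w) :
    ∑ m ∈ (Finset.range (β + 1)).filter (fun m => 2 * m ≤ β),
        w (r + δ + γ / 2 - 1, m, β + γ / 2 - 2 * m)
      = ∑ m ∈ (Finset.range (δ + 1)).filter (fun m => 2 * m + 1 ≤ δ),
          w (r + β + γ / 2, m, δ + γ / 2 - 1 - 2 * m) := by
  classical
  set g := γ / 2 with hg
  conv_lhs => rw [← Finset.sum_filter_ne_zero]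
  conv_rhs => rw [← Finset.sum_filter_ne_zero]
  refine Finset.sum_nbij' (fun m => (2 * m + δ - β - 1) / 2)
    (fun m => (2 * m + β + 1 - δ) / 2) ?_ ?_ ?_ ?_ ?_
  · intro m hm
    simp only [Finset.mem_filter, Finset.mem_range] at hm ⊢
    obtain ⟨⟨hm1, hm2⟩, hm3⟩ := hm
    obtain ⟨⟨hd1, hd2⟩, heq⟩ := hw _ hm3
    simp only [InFlipDomain] at hd1 hd2
    have key : hcFlip r (r + δ + g - 1, m, β + g - 2 * m)
        = (r + β + g, (2 * m + δ - β - 1) / 2,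
           δ + g - 1 - 2 * ((2 * m + δ - β - 1) / 2)) := by
      simp only [hcFlip, Prod.mk.injEq]
      refine ⟨by omega, by omega, by omega⟩
    rw [key] at heq
    refine ⟨⟨by omega, by omega⟩, ?_⟩
    rw [heq]; exact hm3
  · intro m hm
    simp only [Finset.mem_filter, Finset.mem_range] at hm ⊢
    obtain ⟨⟨hm1, hm2⟩, hm3⟩ := hm
    obtain ⟨⟨hd1, hd2⟩, heq⟩ := hw _ hm3
    simp only [InFlipDomain] at hd1 hd2
    have key : hcFlip r (r + β + g, m, δ + g - 1 - 2 * m)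
        = (r + δ + g - 1, (2 * m + β + 1 - δ) / 2,
           β + g - 2 * ((2 * m + β + 1 - δ) / 2)) := by
      simp only [hcFlip, Prod.mk.injEq]
      refine ⟨by omega, by omega, by omega⟩
    rw [key] at heq
    refine ⟨⟨by omega, by omega⟩, ?_⟩
    rw [heq]; exact hm3
  · intro m hm
    simp only [Finset.mem_filter, Finset.mem_range] at hm
    obtain ⟨⟨hm1, hm2⟩, hm3⟩ := hm
    obtain ⟨⟨hd1, hd2⟩, _⟩ := hw _ hm3
    simp only [InFlipDomain] at hd1 hd2
    omega
  · intro m hm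
    simp only [Finset.mem_filter, Finset.mem_range] at hm
    obtain ⟨⟨hm1, hm2⟩, hm3⟩ := hm
    obtain ⟨⟨hd1, hd2⟩, _⟩ := hw _ hm3
    simp only [InFlipDomain] at hd1 hd2
    omega
  · intro m hm
    simp only [Finset.mem_filter, Finset.mem_range] at hm
    obtain ⟨⟨hm1, hm2⟩, hm3⟩ := hm
    obtain ⟨⟨hd1, hd2⟩, heq⟩ := hw _ hm3
    simp only [InFlipDomain] at hd1 hd2
    have key : hcFlip r (r + δ + g - 1, m, β + g - 2 * m)
        = (r + β + g, (2 * m + δ - β - 1) / 2,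
           δ + g - 1 - 2 * ((2 * m + δ - β - 1) / 2)) := by
      simp only [hcFlip, Prod.mk.injEq]
      refine ⟨by omega, by omega, by omega⟩
    rw [key] at heq
    exact heq.symm
end

section
/- Let r ≥ 2 be an integer, set R = 2r − 2, let δ, β, γ ∈ ℕ, set λ₁ = R + 2δ + γ, λ₁ᴿ = R + 2β + γ and n = r − 1 + δ + β + γ, and let w : ℕ³ → ℕ be r-flip-compatible. For a triple μ = (a,b,c) write μ₁ = a, m₂(μ) = b, m₁(μ) = c and weight(μ) = a + 2b + c. Then the sum of w(μ)·w(ν) over all pairs of triples (μ, ν) with μ₁ ≥ 1, ν₁ ≥ 1, weight(μ) = weight(ν) = n, μ₁ + ν₁ = λ₁, and m₂(μ) + m₂(ν) ≤ β ≤ m₂(μ) + m₂(ν) + min(m₁(μ), m₁(ν)), equals the sum of w(μ)·w(ν) over all pairs of triples (μ, ν) with μ₁ ≥ 1, ν₁ ≥ 1, weight(μ) = weight(ν) = n, μ₁ + ν₁ = λ₁ᴿ + 2, and m₂(μ) + m₂(ν) + 1 ≤ δ ≤ 1 + m₂(μ) + m₂(ν) + min(m₁(μ), m₁(ν)). -/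
/-- The finite set of all triples `(a, b, c)` of weight `a + 2b + c = n`. -/
def triplesOfWeight (n : ℕ) : Finset (ℕ × ℕ × ℕ) :=
  (Finset.range (n + 1) ×ˢ Finset.range (n + 1) ×ˢ Finset.range (n + 1)).filter
    (fun p => p.1 + 2 * p.2.1 + p.2.2 = n)

lemma mem_triplesOfWeight {n : ℕ} {p : ℕ × ℕ × ℕ} :
    p ∈ triplesOfWeight n ↔ p.1 + 2 * p.2.1 + p.2.2 = n := by
  simp only [triplesOfWeight, Finset.mem_filter, Finset.mem_product, Finset.mem_range,
    Nat.lt_succ_iff]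
  omega

/-- With `R = 2r - 2`, `λ₁ = R + 2δ + γ`, `λ₁ᴿ = R + 2β + γ`, `n = r - 1 + δ + β + γ`,
and `w` an `r`-flip-compatible weight, the sum of `w(μ)·w(ν)` over pairs of triples
of weight `n` with `μ₁, ν₁ ≥ 1`, `μ₁ + ν₁ = λ₁` and
`m₂(μ) + m₂(ν) ≤ β ≤ m₂(μ) + m₂(ν) + min(m₁(μ), m₁(ν))` equals the analogous sum
with `μ₁ + ν₁ = λ₁ᴿ + 2` and `m₂(μ) + m₂(ν) + 1 ≤ δ ≤ 1 + m₂(μ) + m₂(ν) + min(m₁(μ), m₁(ν))`. -/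
theorem sum_D11_0_eq_sum_D11_2 (r δ β γ : ℕ) (hr : 2 ≤ r)
    (w : ℕ × ℕ × ℕ → ℕ) (hw : FlipCompatible r w)
    (R lam1 lam1R n : ℕ) (hR : R = 2 * r - 2)
    (hlam1 : lam1 = R + 2 * δ + γ) (hlam1R : lam1R = R + 2 * β + γ)
    (hn : n = r - 1 + δ + β + γ) :
    ∑ p ∈ (triplesOfWeight n ×ˢ triplesOfWeight n).filter
        (fun p => 1 ≤ p.1.1 ∧ 1 ≤ p.2.1 ∧ p.1.1 + p.2.1 = lam1 ∧
          p.1.2.1 + p.2.2.1 ≤ β ∧ β ≤ p.1.2.1 + p.2.2.1 + min p.1.2.2 p.2.2.2),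
        w p.1 * w p.2
      = ∑ p ∈ (triplesOfWeight n ×ˢ triplesOfWeight n).filter
          (fun p => 1 ≤ p.1.1 ∧ 1 ≤ p.2.1 ∧ p.1.1 + p.2.1 = lam1R + 2 ∧
            p.1.2.1 + p.2.2.1 + 1 ≤ δ ∧ δ ≤ 1 + p.1.2.1 + p.2.2.1 + min p.1.2.2 p.2.2.2),
          w p.1 * w p.2 := by
  classical
  refine Eq.trans (Finset.sum_filter_ne_zero _).symm
    (Eq.trans ?_ (Finset.sum_filter_ne_zero _))
  refine Finset.sum_nbij' (i := fun p => (hcFlip r p.1, hcFlip r p.2))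
    (j := fun p => (hcFlip r p.1, hcFlip r p.2)) ?_ ?_ ?_ ?_ ?_
  · rintro ⟨⟨a1, b1, c1⟩, ⟨a2, b2, c2⟩⟩ hp
    simp only [Finset.mem_filter, Finset.mem_product, mem_triplesOfWeight] at hp ⊢
    obtain ⟨⟨⟨hp1, hp2⟩, h1, h2, hsum, hlo, hhi⟩, hne⟩ := hp
    have hne1 : w (a1, b1, c1) ≠ 0 := fun h => hne (by simp [h])
    have hne2 : w (a2, b2, c2) ≠ 0 := fun h => hne (by simp [h])
    obtain ⟨⟨hd1, hd1'⟩, he1⟩ := hw (a1, b1, c1) hne1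
    obtain ⟨⟨hd2, hd2'⟩, he2⟩ := hw (a2, b2, c2) hne2
    have hq1 : 2 * ((a1 - r - c1) / 2) = a1 - r - c1 := Nat.mul_div_cancel' hd1'
    have hq2 : 2 * ((a2 - r - c2) / 2) = a2 - r - c2 := Nat.mul_div_cancel' hd2'
    refine ⟨⟨⟨?_, ?_⟩, ?_, ?_, ?_, ?_, ?_⟩, ?_⟩
    all_goals simp only [hcFlip] at *
    · omega
    · omega
    · omega
    · omega
    · omega
    · omega
    · omega
    · rw [he1, he2]; exact hne
  · rintro ⟨⟨a1, b1, c1⟩, ⟨a2, b2, c2⟩⟩ hp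
    simp only [Finset.mem_filter, Finset.mem_product, mem_triplesOfWeight] at hp ⊢
    obtain ⟨⟨⟨hp1, hp2⟩, h1, h2, hsum, hlo, hhi⟩, hne⟩ := hp
    have hne1 : w (a1, b1, c1) ≠ 0 := fun h => hne (by simp [h])
    have hne2 : w (a2, b2, c2) ≠ 0 := fun h => hne (by simp [h])
    obtain ⟨⟨hd1, hd1'⟩, he1⟩ := hw (a1, b1, c1) hne1
    obtain ⟨⟨hd2, hd2'⟩, he2⟩ := hw (a2, b2, c2) hne2
    have hq1 : 2 * ((a1 - r - c1) / 2) = a1 - r - c1 := Nat.mul_div_cancel' hd1'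
    have hq2 : 2 * ((a2 - r - c2) / 2) = a2 - r - c2 := Nat.mul_div_cancel' hd2'
    refine ⟨⟨⟨?_, ?_⟩, ?_, ?_, ?_, ?_, ?_⟩, ?_⟩
    all_goals simp only [hcFlip] at *
    · omega
    · omega
    · omega
    · omega
    · omega
    · omega
    · omega
    · rw [he1, he2]; exact hne
  · rintro ⟨⟨a1, b1, c1⟩, ⟨a2, b2, c2⟩⟩ hp
    simp only [Finset.mem_filter, Finset.mem_product, mem_triplesOfWeight] at hp
    obtain ⟨⟨⟨hp1, hp2⟩, h1, h2, hsum, hlo, hhi⟩, hne⟩ := hp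
    have hne1 : w (a1, b1, c1) ≠ 0 := fun h => hne (by simp [h])
    have hne2 : w (a2, b2, c2) ≠ 0 := fun h => hne (by simp [h])
    obtain ⟨⟨hd1, hd1'⟩, he1⟩ := hw (a1, b1, c1) hne1
    obtain ⟨⟨hd2, hd2'⟩, he2⟩ := hw (a2, b2, c2) hne2
    have hq1 : 2 * ((a1 - r - c1) / 2) = a1 - r - c1 := Nat.mul_div_cancel' hd1'
    have hq2 : 2 * ((a2 - r - c2) / 2) = a2 - r - c2 := Nat.mul_div_cancel' hd2'
    simp only [hcFlip, Prod.mk.injEq] at *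
    exact ⟨⟨by omega, by omega, trivial⟩, by omega, by omega, trivial⟩
  · rintro ⟨⟨a1, b1, c1⟩, ⟨a2, b2, c2⟩⟩ hp
    simp only [Finset.mem_filter, Finset.mem_product, mem_triplesOfWeight] at hp
    obtain ⟨⟨⟨hp1, hp2⟩, h1, h2, hsum, hlo, hhi⟩, hne⟩ := hp
    have hne1 : w (a1, b1, c1) ≠ 0 := fun h => hne (by simp [h])
    have hne2 : w (a2, b2, c2) ≠ 0 := fun h => hne (by simp [h])
    obtain ⟨⟨hd1, hd1'⟩, he1⟩ := hw (a1, b1, c1) hne1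
    obtain ⟨⟨hd2, hd2'⟩, he2⟩ := hw (a2, b2, c2) hne2
    have hq1 : 2 * ((a1 - r - c1) / 2) = a1 - r - c1 := Nat.mul_div_cancel' hd1'
    have hq2 : 2 * ((a2 - r - c2) / 2) = a2 - r - c2 := Nat.mul_div_cancel' hd2'
    simp only [hcFlip, Prod.mk.injEq] at *
    exact ⟨⟨by omega, by omega, trivial⟩, by omega, by omega, trivial⟩
  · rintro ⟨⟨a1, b1, c1⟩, ⟨a2, b2, c2⟩⟩ hp
    simp only [Finset.mem_filter, Finset.mem_product, mem_triplesOfWeight] at hp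
    obtain ⟨⟨⟨hp1, hp2⟩, _⟩, hne⟩ := hp
    have hne1 : w (a1, b1, c1) ≠ 0 := fun h => hne (by simp [h])
    have hne2 : w (a2, b2, c2) ≠ 0 := fun h => hne (by simp [h])
    obtain ⟨_, he1⟩ := hw (a1, b1, c1) hne1
    obtain ⟨_, he2⟩ := hw (a2, b2, c2) hne2
    simp [he1, he2]
end

section
/- Let r ≥ 2 be an integer, set R = 2r − 2, let δ, β, γ ∈ ℕ, set λ₁ = R + 2δ + γ, λ₁ᴿ = R + 2β + γ and n = r − 1 + δ + β + γ, and let w : ℕ³ → ℕ be r-flip-compatible. For a triple μ = (a,b,c) write μ₁ = a, m₂(μ) = b, m₁(μ) = c and weight(μ) = a + 2b + c; for a pair (μ,ν) and an integer t set m₂ = m₂(μ) + m₂(ν), m₁ = min(m₁(μ), m₁(ν)), and χ_t(μ,ν) = 1 if t = m₂ or t = m₂ + m₁ + 1, and χ_t(μ,ν) = 2 otherwise. Then the sum of χ_β(μ,ν)·w(μ)·w(ν) over all pairs of triples (μ,ν) with μ₁ ≥ 1, ν₁ ≥ 1, weight(μ) = weight(ν) = n, μ₁ + ν₁ = λ₁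 + 1, and m₂ ≤ β ≤ m₂ + m₁ + 1, equals the sum of χ_δ(μ,ν)·w(μ)·w(ν) over all pairs of triples (μ,ν) with μ₁ ≥ 1, ν₁ ≥ 1, weight(μ) = weight(ν) = n, μ₁ + ν₁ = λ₁ᴿ + 1, and m₂ ≤ δ ≤ m₂ + m₁ + 1. -/
/-- `χ_t(μ, ν) = 1` if `t = m₂(μ) + m₂(ν)` or `t = m₂(μ) + m₂(ν) + min(m₁(μ), m₁(ν)) + 1`,
and `χ_t(μ, ν) = 2` otherwise. -/
def chiLR (t : ℕ) (mu nu : ℕ × ℕ × ℕ) : ℕ :=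
  if t = mu.2.1 + nu.2.1 ∨ t = mu.2.1 + nu.2.1 + min mu.2.2 nu.2.2 + 1 then 1 else 2

lemma flip_step (r δ β γ n : ℕ) (hr : 2 ≤ r) (w : ℕ × ℕ × ℕ → ℕ)
    (hw : FlipCompatible r w) (hn : n = r - 1 + δ + β + γ) :
    ∀ p ∈ (triplesOfWeight n ×ˢ triplesOfWeight n).filter
        (fun p => (1 ≤ p.1.1 ∧ 1 ≤ p.2.1 ∧ p.1.1 + p.2.1 = (2 * r - 2 + 2 * δ + γ) + 1 ∧
          p.1.2.1 + p.2.2.1 ≤ β ∧ β ≤ p.1.2.1 + p.2.2.1 + min p.1.2.2 p.2.2.2 + 1)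
          ∧ w p.1 ≠ 0 ∧ w p.2 ≠ 0),
      ((hcFlip r p.1, hcFlip r p.2) ∈ (triplesOfWeight n ×ˢ triplesOfWeight n).filter
        (fun p => (1 ≤ p.1.1 ∧ 1 ≤ p.2.1 ∧ p.1.1 + p.2.1 = (2 * r - 2 + 2 * β + γ) + 1 ∧
          p.1.2.1 + p.2.2.1 ≤ δ ∧ δ ≤ p.1.2.1 + p.2.2.1 + min p.1.2.2 p.2.2.2 + 1)
          ∧ w p.1 ≠ 0 ∧ w p.2 ≠ 0)) ∧
      (hcFlip r (hcFlip r p.1), hcFlip r (hcFlip r p.2)) = p ∧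
      chiLR β p.1 p.2 * (w p.1 * w p.2)
        = chiLR δ (hcFlip r p.1) (hcFlip r p.2) * (w (hcFlip r p.1) * w (hcFlip r p.2)) := by
  intro p hp
  obtain ⟨⟨a, b, c⟩, ⟨a', b', c'⟩⟩ := p
  simp only [Finset.mem_filter, Finset.mem_product, triplesOfWeight, Finset.mem_range] at hp
  obtain ⟨⟨⟨-, hwt1⟩, -, hwt2⟩, ⟨h1, h2, hsum, hlo, hhi⟩, hw1, hw2⟩ := hp
  obtain ⟨hdom1, hwf1⟩ := hw (a, b, c) hw1
  obtain ⟨hdom2, hwf2⟩ := hw (a', b', c') hw2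
  have hdom1' : r + c ≤ a ∧ 2 ∣ (a - r - c) := hdom1
  have hdom2' : r + c' ≤ a' ∧ 2 ∣ (a' - r - c') := hdom2
  obtain ⟨k, hk⟩ := hdom1'.2
  obtain ⟨k', hk'⟩ := hdom2'.2
  have hc1 := hdom1'.1
  have hc2 := hdom2'.1
  have ha : a = r + c + 2 * k := by omega
  have ha' : a' = r + c' + 2 * k' := by omega
  have hF1 : hcFlip r (a, b, c) = (r + 2 * b + c, k, c) := by
    simp only [hcFlip, Prod.mk.injEq, true_and, and_true]
    omega
  have hF2 : hcFlip r (a', b', c') = (r + 2 * b' + c', k', c') := by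
    simp only [hcFlip, Prod.mk.injEq, true_and, and_true]
    omega
  have hwf1' : w (r + 2 * b + c, k, c) = w (a, b, c) := by rw [← hF1]; exact hwf1
  have hwf2' : w (r + 2 * b' + c', k', c') = w (a', b', c') := by rw [← hF2]; exact hwf2
  have hw1' : w (r + 2 * b + c, k, c) ≠ 0 := by rw [hwf1']; exact hw1
  have hw2' : w (r + 2 * b' + c', k', c') ≠ 0 := by rw [hwf2']; exact hw2
  refine ⟨?_, ?_, ?_⟩
  · rw [hF1, hF2]
    simp only [Finset.mem_filter, Finset.mem_product, triplesOfWeight, Finset.mem_range]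
    refine ⟨⟨⟨?_, ?_⟩, ?_, ?_⟩, ⟨?_, ?_, ?_, ?_, ?_⟩, hw1', hw2'⟩ <;> omega
  · rw [hF1, hF2]
    have e1 : hcFlip r (r + 2 * b + c, k, c) = (a, b, c) := by
      simp only [hcFlip, Prod.mk.injEq, true_and, and_true]
      omega
    have e2 : hcFlip r (r + 2 * b' + c', k', c') = (a', b', c') := by
      simp only [hcFlip, Prod.mk.injEq, true_and, and_true]
      omega
    rw [e1, e2]
  · rw [hF1, hF2, hwf1', hwf2']
    have hiff : (β = b + b' ∨ β = b + b' + min c c' + 1)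
        ↔ (δ = k + k' ∨ δ = k + k' + min c c' + 1) := by omega
    simp only [chiLR]
    rw [if_congr hiff rfl rfl]

/-- With `R = 2r - 2`, `λ₁ = R + 2δ + γ`, `λ₁ᴿ = R + 2β + γ`, `n = r - 1 + δ + β + γ`,
and `w` an `r`-flip-compatible weight, the sum of `χ_β(μ,ν)·w(μ)·w(ν)` over pairs of
triples of weight `n` with `μ₁, ν₁ ≥ 1`, `μ₁ + ν₁ = λ₁ + 1` and
`m₂ ≤ β ≤ m₂ + m₁ + 1` equals the analogous sum of `χ_δ(μ,ν)·w(μ)·w(ν)` with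
`μ₁ + ν₁ = λ₁ᴿ + 1` and `m₂ ≤ δ ≤ m₂ + m₁ + 1`. -/
theorem sum_D11_1_eq_sum_D11_1_flipped (r δ β γ : ℕ) (hr : 2 ≤ r)
    (w : ℕ × ℕ × ℕ → ℕ) (hw : FlipCompatible r w)
    (R lam1 lam1R n : ℕ) (hR : R = 2 * r - 2)
    (hlam1 : lam1 = R + 2 * δ + γ) (hlam1R : lam1R = R + 2 * β + γ)
    (hn : n = r - 1 + δ + β + γ) :
    ∑ p ∈ (triplesOfWeight n ×ˢ triplesOfWeight n).filter
        (fun p => 1 ≤ p.1.1 ∧ 1 ≤ p.2.1 ∧ p.1.1 + p.2.1 = lam1 + 1 ∧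
          p.1.2.1 + p.2.2.1 ≤ β ∧ β ≤ p.1.2.1 + p.2.2.1 + min p.1.2.2 p.2.2.2 + 1),
        chiLR β p.1 p.2 * (w p.1 * w p.2)
      = ∑ p ∈ (triplesOfWeight n ×ˢ triplesOfWeight n).filter
          (fun p => 1 ≤ p.1.1 ∧ 1 ≤ p.2.1 ∧ p.1.1 + p.2.1 = lam1R + 1 ∧
            p.1.2.1 + p.2.2.1 ≤ δ ∧ δ ≤ p.1.2.1 + p.2.2.1 + min p.1.2.2 p.2.2.2 + 1),
          chiLR δ p.1 p.2 * (w p.1 * w p.2) := by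
    classical
  subst hR hlam1 hlam1R
  have reduce : ∀ (L t : ℕ),
      ∑ p ∈ (triplesOfWeight n ×ˢ triplesOfWeight n).filter
        (fun p => 1 ≤ p.1.1 ∧ 1 ≤ p.2.1 ∧ p.1.1 + p.2.1 = L + 1 ∧
          p.1.2.1 + p.2.2.1 ≤ t ∧ t ≤ p.1.2.1 + p.2.2.1 + min p.1.2.2 p.2.2.2 + 1),
        chiLR t p.1 p.2 * (w p.1 * w p.2)
      = ∑ p ∈ (triplesOfWeight n ×ˢ triplesOfWeight n).filter
        (fun p => (1 ≤ p.1.1 ∧ 1 ≤ p.2.1 ∧ p.1.1 + p.2.1 = L + 1 ∧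
          p.1.2.1 + p.2.2.1 ≤ t ∧ t ≤ p.1.2.1 + p.2.2.1 + min p.1.2.2 p.2.2.2 + 1)
          ∧ w p.1 ≠ 0 ∧ w p.2 ≠ 0),
        chiLR t p.1 p.2 * (w p.1 * w p.2) := by
    intro L t
    symm
    apply Finset.sum_subset
    · intro x hx
      simp only [Finset.mem_filter] at hx ⊢
      exact ⟨hx.1, hx.2.1⟩
    · intro x hx hnx
      simp only [Finset.mem_filter] at hx hnx
      have : w x.1 = 0 ∨ w x.2 = 0 := by tauto
      rcases this with h | h <;> simp [h]
  rw [reduce _ β, reduce _ δ]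
  have h1 := flip_step r δ β γ n hr w hw hn
  have h2 := flip_step r β δ γ n hr w hw (by omega)
  exact Finset.sum_nbij' (fun p => (hcFlip r p.1, hcFlip r p.2))
    (fun p => (hcFlip r p.1, hcFlip r p.2)) (fun p hp => (h1 p hp).1)
    (fun p hp => (h2 p hp).1) (fun p hp => (h1 p hp).2.1) (fun p hp => (h2 p hp).2.1)
    (fun p hp => (h1 p hp).2.2)
end
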